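/- arXiv:2110.14292 — 4 statements merged into one kernel-verified Lean document; each statement's English description precedes it below -/
import Mathlib

section
/- Let ψ : [0,h] → ℝ be real-analytic at 0 (admitting a convergent Taylor expansion), and let P_j be the j-th shifted Legendre polynomial on [0,1], orthonormal with ∫₀¹ P_i P_j = δ_{ij}. Then for each j and each 0 ≤ i ≤ j, the quantity ∫₀¹ P_j(c) c^i ψ(ch) dc is O(h^{j-i}) as h → 0, i.e., there exist constants K, δ > 0 such that |∫₀¹ P_j(c) c^i ψ(ch) dc| ≤ K h^{j-i} for 0 < h < δ. -/
/-!
Taylor's formula gives `ψ y = ∑_{n < j - i} aₙ yⁿ + O(|y| ^ (j - i))`. Against the polynomial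
part, `c ^ i * (c * h) ^ n` with `i + n < j` is a polynomial in `c` of degree `< j`, which is
orthogonal to `P j` because `P 0, …, P (j - 1)` span all such polynomials. Since `|c * h| ≤ h`
on `[0, 1]`, the remainder contributes at most `(∫₀¹ |P j|) · O(h ^ (j - i))`.
-/

open Polynomial MeasureTheory Filter Topology Asymptotics Set

theorem mul_mem_ball_zero_of_mem_Icc {c h ε : ℝ} (hc : c ∈ Icc (0:ℝ) 1)
    (hh : h ∈ Metric.ball 0 ε) : c * h ∈ Metric.ball 0 ε :=
  balanced_ball_zero.smul_mem (by rw [Real.norm_of_nonneg hc.1]; exact hc.2) hh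

theorem isBigO_integral_mul_comp_mul {f g : ℝ → ℝ} {N : ℕ}
    (hf : IntervalIntegrable f volume 0 1) (hg : g =O[𝓝 0] fun y ↦ ‖y‖ ^ N) :
    (fun h ↦ ∫ c in (0:ℝ)..1, f c * g (c * h)) =O[𝓝 0] fun h ↦ ‖h‖ ^ N := by
  obtain ⟨M, hM0, hM⟩ := isBigO_iff'.mp hg
  obtain ⟨ε, hε, hbound⟩ := Metric.eventually_nhds_iff_ball.mp hM
  refine isBigO_iff.mpr ⟨(∫ c in (0:ℝ)..1, ‖f c‖) * M, ?_⟩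
  filter_upwards [Metric.ball_mem_nhds 0 hε] with h hh
  have hpt : ∀ c ∈ Ioc (0:ℝ) 1, ‖f c * g (c * h)‖ ≤ ‖f c‖ * (M * ‖h‖ ^ N) := by
    intro c hc
    have hch : ‖c * h‖ ≤ ‖h‖ := by
      rw [norm_mul, Real.norm_of_nonneg hc.1.le]
      exact mul_le_of_le_one_left (norm_nonneg h) hc.2
    rw [norm_mul]
    gcongr
    refine (hbound _ (mul_mem_ball_zero_of_mem_Icc (Ioc_subset_Icc_self hc) hh)).trans ?_
    simp only [norm_pow, norm_norm]
    gcongr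
  calc ‖∫ c in (0:ℝ)..1, f c * g (c * h)‖
      ≤ ∫ c in (0:ℝ)..1, ‖f c‖ * (M * ‖h‖ ^ N) :=
        intervalIntegral.norm_integral_le_of_norm_le zero_le_one
          (ae_of_all _ hpt) (hf.norm.mul_const _)
    _ = (∫ c in (0:ℝ)..1, ‖f c‖) * M * ‖‖h‖ ^ N‖ := by
        rw [intervalIntegral.integral_mul_const, norm_pow, norm_norm, mul_assoc]

theorem eventually_intervalIntegrable_comp_mul {ψ : ℝ → ℝ}
    (hψ : ∀ᶠ y in 𝓝 0, ContinuousAt ψ y) :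
    ∀ᶠ h in 𝓝 0, IntervalIntegrable (fun c ↦ ψ (c * h)) volume 0 1 := by
  obtain ⟨ε, hε, hcont⟩ := Metric.eventually_nhds_iff_ball.mp hψ
  filter_upwards [Metric.ball_mem_nhds 0 hε] with h hh
  refine ContinuousOn.intervalIntegrable fun c hc ↦ ?_
  rw [uIcc_of_le zero_le_one] at hc
  exact (hcont _ (mul_mem_ball_zero_of_mem_Icc hc hh)).comp_continuousWithinAt
    (f := fun c ↦ c * h) (continuous_mul_const h).continuousWithinAt

theorem exists_bound_of_isBigO_norm_pow {f : ℝ → ℝ} {N : ℕ}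
    (hf : f =O[𝓝 0] fun h ↦ ‖h‖ ^ N) :
    ∃ K δ : ℝ, 0 < K ∧ 0 < δ ∧ ∀ h : ℝ, 0 < h → h < δ → |f h| ≤ K * h ^ N := by
  obtain ⟨K, hK, hbound⟩ := isBigO_iff'.mp hf
  obtain ⟨δ, hδ, hball⟩ := Metric.eventually_nhds_iff_ball.mp hbound
  refine ⟨K, δ, hK, hδ, fun h hh hhδ ↦ ?_⟩
  simpa [abs_of_pos hh] using hball h (by simpa [abs_of_pos hh] using hhδ)

namespace Polynomial.Sequence

def IsOrthogonalOn (S : Sequence ℝ) (a b : ℝ) : Prop :=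
  Pairwise fun i j ↦ ∫ x in a..b, (S i).eval x * (S j).eval x = 0

variable {S : Sequence ℝ} {a b : ℝ}

theorem IsOrthogonalOn.integral_eval_mul_eq_zero_of_degree_lt (horth : S.IsOrthogonalOn a b)
    {j : ℕ} {Q : ℝ[X]} (hQ : Q.degree < j) :
    ∫ x in a..b, (S j).eval x * Q.eval x = 0 := by
  have hspan : Q ∈ Submodule.span ℝ (S '' Iio j) := by
    rw [S.span_degreeLT fun i _ ↦ (leadingCoeff_ne_zero.mpr (S.ne_zero i)).isUnit]
    exact mem_degreeLT.mpr hQ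
  clear hQ
  have hint (R : ℝ[X]) : IntervalIntegrable (fun x ↦ (S j).eval x * R.eval x) volume a b :=
    ((S j).continuous.mul R.continuous).intervalIntegrable a b
  induction hspan using Submodule.span_induction with
  | mem R hR =>
    obtain ⟨i, hi, rfl⟩ := hR
    rw [intervalIntegral.integral_congr fun x _ ↦ mul_comm _ _]
    exact horth (Nat.ne_of_lt hi)
  | zero => simp
  | add R R' _ _ hR hR' =>
    simp only [eval_add, mul_add]
    rw [intervalIntegral.integral_add (hint R) (hint R'), hR, hR', add_zero]
  | smul c R _ hR =>
    simp only [eval_smul, smul_eq_mul, mul_left_comm _ c]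
    rw [intervalIntegral.integral_const_mul, hR, mul_zero]

theorem IsOrthogonalOn.integral_eval_mul_pow_eq_zero (horth : S.IsOrthogonalOn a b)
    {j r : ℕ} (hr : r < j) :
    ∫ x in a..b, (S j).eval x * x ^ r = 0 := by
  simpa using horth.integral_eval_mul_eq_zero_of_degree_lt (Q := X ^ r) (by simpa using hr)

theorem IsOrthogonalOn.integral_eval_mul_pow_mul_partialSum_eq_zero
    (horth : S.IsOrthogonalOn a b) (p : FormalMultilinearSeries ℝ ℝ ℝ) {i j N : ℕ}
    (hN : i + N ≤ j) (h : ℝ) :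
    ∫ c in a..b, (S j).eval c * c ^ i * p.partialSum N (c * h) = 0 := by
  have hsplit (c : ℝ) : (S j).eval c * c ^ i * p.partialSum N (c * h) =
      ∑ k ∈ Finset.range N, h ^ k * p.coeff k * ((S j).eval c * c ^ (i + k)) := by
    simp only [FormalMultilinearSeries.partialSum, FormalMultilinearSeries.apply_eq_pow_smul_coeff,
      smul_eq_mul, Finset.mul_sum]
    refine Finset.sum_congr rfl fun k _ ↦ by ring
  simp only [hsplit]
  rw [intervalIntegral.integral_finsetSum fun k _ ↦
    (by fun_prop : Continuous fun c ↦ h ^ k * p.coeff k * ((S j).eval c * c ^ (i + k))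
      ).intervalIntegrable a b]
  refine Finset.sum_eq_zero fun k hk ↦ ?_
  rw [intervalIntegral.integral_const_mul,
    horth.integral_eval_mul_pow_eq_zero (by simp at hk; omega), mul_zero]

theorem IsOrthogonalOn.isBigO_integral_eval_mul_pow_mul_comp_mul
    (horth : S.IsOrthogonalOn 0 1) {ψ : ℝ → ℝ} (hψ : AnalyticAt ℝ ψ 0) {i j : ℕ}
    (hij : i ≤ j) :
    (fun h ↦ ∫ c in (0:ℝ)..1, (S j).eval c * c ^ i * ψ (c * h)) =O[𝓝 0]
      fun h ↦ ‖h‖ ^ (j - i) := by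
  obtain ⟨p, hp⟩ := hψ
  have hf : Continuous fun c ↦ (S j).eval c * c ^ i := by fun_prop
  have hrem : (fun y ↦ ψ y - p.partialSum (j - i) y) =O[𝓝 0] fun y ↦ ‖y‖ ^ (j - i) := by
    simpa using hp.isBigO_sub_partialSum_pow (j - i)
  refine (isBigO_integral_mul_comp_mul (hf.intervalIntegrable 0 1) hrem).congr' ?_ .rfl
  filter_upwards [eventually_intervalIntegrable_comp_mul
    (hp.analyticAt.eventually_analyticAt.mono fun y hy ↦ hy.continuousAt)] with h hψh
  have hsum : IntervalIntegrable (fun c ↦ p.partialSum (j - i) (c * h)) volume 0 1 :=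
    ((p.partialSum_continuous _).comp (continuous_mul_const h)).intervalIntegrable 0 1
  simp only [mul_sub]
  rw [intervalIntegral.integral_sub (hψh.continuousOn_mul hf.continuousOn)
    (hsum.continuousOn_mul hf.continuousOn),
    horth.integral_eval_mul_pow_mul_partialSum_eq_zero p (by omega), sub_zero]

end Polynomial.Sequence

/-- If `ψ` is real-analytic at `0` and `P j` is the orthonormal (shifted Legendre)
basis on `[0,1]`, then `∫₀¹ P_j(c) c^i ψ(ch) dc = O(h^{j-i})` as `h → 0⁺`, for `i ≤ j`. -/
theorem stmt_3 (P : ℕ → Polynomial ℝ)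
    (hdeg : ∀ j, (P j).natDegree = j)
    (horth : ∀ i j, (∫ x in (0:ℝ)..1, (P i).eval x * (P j).eval x)
      = if i = j then 1 else 0)
    (ψ : ℝ → ℝ) (hψ : AnalyticAt ℝ ψ 0)
    (j i : ℕ) (hij : i ≤ j) :
    ∃ K δ : ℝ, 0 < K ∧ 0 < δ ∧ ∀ h : ℝ, 0 < h → h < δ →
      |∫ c in (0:ℝ)..1, (P j).eval c * c ^ i * ψ (c * h)| ≤ K * h ^ (j - i) := by
  have hP : ∀ k, P k ≠ 0 := fun k hk ↦ by simpa [hk] using horth k k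
  let S : Sequence ℝ := ⟨P, fun k ↦ by rw [degree_eq_natDegree (hP k), hdeg k]⟩
  have hS : S.IsOrthogonalOn 0 1 := fun k l hkl ↦ by simpa [hkl] using horth k l
  exact exists_bound_of_isBigO_norm_pow (hS.isBigO_integral_eval_mul_pow_mul_comp_mul hψ hij)
end

section
/- Let σ : [0,h] → ℝ^m be a C¹ path with σ polynomial satisfying σ̇(ch) = ∑_{i,j=0}^{s-1} P_i(c) ρ_{ij}(σ) γ_j(σ) for c ∈ [0,1], where γ_j(σ) = ∫₀¹ P_j(τ) ∇H(σ(τh)) dτ and ρ_{ij}(σ) = ∫₀¹ P_i(τ) P_j(τ) B(σ(τh)) dτ with B pointwise skew-symmetric. Then H(σ(h)) = H(σ(0)). -/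
open Matrix

/-- Energy conservation for the continuous line-integral method: if
`σ̇(ch) = ∑_{i,j<s} P_i(c) ρ_{ij}(σ) γ_j(σ)` on `[0,1]`, then `H(σ(h)) = H(σ(0))`. -/
theorem stmt_7 (m s : ℕ) (h : ℝ) (hh : 0 < h)
    (P : ℕ → Polynomial ℝ)
    (B : (Fin m → ℝ) → Matrix (Fin m) (Fin m) ℝ)
    (hB : ∀ y, (B y)ᵀ = -(B y)) (hBc : Continuous B)
    (H : (Fin m → ℝ) → ℝ) (gradH : (Fin m → ℝ) → (Fin m → ℝ))
    (hH : ∀ x, HasFDerivAt H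
      (∑ i, gradH x i • (ContinuousLinearMap.proj i : (Fin m → ℝ) →L[ℝ] ℝ)) x)
    (hHc : Continuous gradH)
    (σ σ' : ℝ → (Fin m → ℝ))
    (hσ : ∀ t, HasDerivAt σ (σ' t) t) (hσ'c : Continuous σ')
    (γ : ℕ → (Fin m → ℝ))
    (hγ : ∀ j, γ j = ∫ τ in (0:ℝ)..1, (P j).eval τ • gradH (σ (τ * h)))
    (ρ : ℕ → ℕ → Matrix (Fin m) (Fin m) ℝ)
    (hρ : ∀ i j, ρ i j = Matrix.of fun a b =>
      ∫ τ in (0:ℝ)..1, (P i).eval τ * (P j).eval τ * B (σ (τ * h)) a b)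
    (hode : ∀ c ∈ Set.Icc (0:ℝ) 1, σ' (c * h) =
      ∑ i ∈ Finset.range s, ∑ j ∈ Finset.range s,
        (P i).eval c • (ρ i j).mulVec (γ j)) :
    H (σ h) = H (σ 0) := by
  have hσc : Continuous σ := by
    rw [continuous_iff_continuousAt]; exact fun t => (hσ t).continuousAt
  -- continuity of the composed path and helpers
  have hσch : Continuous fun c : ℝ => σ (c * h) := hσc.comp (continuous_id.mul continuous_const)
  have hgc : Continuous fun c : ℝ => gradH (σ (c * h)) := hHc.comp hσch
  -- the derivative of c ↦ H (σ (c * h))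
  set g' : ℝ → ℝ := fun c => h * (gradH (σ (c * h)) ⬝ᵥ σ' (c * h)) with hg'
  have hderiv : ∀ c : ℝ, HasDerivAt (fun c => H (σ (c * h))) (g' c) c := by
    intro c
    have h1 : HasDerivAt (fun c : ℝ => c * h) h c := by
      simpa using (hasDerivAt_id c).mul_const h
    have h2 : HasDerivAt (fun c : ℝ => σ (c * h)) (h • σ' (c * h)) c :=
      (hσ (c * h)).scomp c h1
    have h3 := (hH (σ (c * h))).comp_hasDerivAt c h2
    have h4 : (∑ i, gradH (σ (c * h)) i • (ContinuousLinearMap.proj i :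
        (Fin m → ℝ) →L[ℝ] ℝ)) (h • σ' (c * h)) = g' c := by
      simp only [hg', ContinuousLinearMap.sum_apply, ContinuousLinearMap.smul_apply,
        ContinuousLinearMap.proj_apply, Pi.smul_apply, smul_eq_mul, dotProduct,
        Finset.mul_sum]
      exact Finset.sum_congr rfl fun i _ => by ring
    rwa [h4] at h3
  have hg'c : Continuous g' := by
    apply continuous_const.mul
    simp only [dotProduct]
    exact continuous_finset_sum _ fun i _ =>
      ((continuous_apply i).comp hgc).mul
        ((continuous_apply i).comp (hσ'c.comp (continuous_id.mul continuous_const)))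
  have key : ∫ c in (0:ℝ)..1, g' c = H (σ (1 * h)) - H (σ (0 * h)) :=
    intervalIntegral.integral_eq_sub_of_hasDerivAt (fun c _ => hderiv c)
      (hg'c.intervalIntegrable 0 1)
  -- rewrite the integrand using the ODE
  have hEq : Set.EqOn g'
      (fun c => ∑ i ∈ Finset.range s, ∑ j ∈ Finset.range s,
        (h * (P i).eval c) * (gradH (σ (c * h)) ⬝ᵥ (ρ i j).mulVec (γ j)))
      (Set.uIcc (0:ℝ) 1) := by
    intro c hc
    rw [Set.uIcc_of_le (by norm_num : (0:ℝ) ≤ 1)] at hc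
    simp only [hg', hode c hc, dotProduct, mulVec, Finset.mul_sum, Finset.sum_apply,
      Pi.smul_apply, smul_eq_mul]
    rw [Finset.sum_comm]
    refine Finset.sum_congr rfl fun i _ => ?_
    rw [Finset.sum_comm]
    refine Finset.sum_congr rfl fun j _ => ?_
    exact Finset.sum_congr rfl fun a _ => Finset.sum_congr rfl fun b _ => by ring
  have hPc : ∀ i : ℕ, Continuous fun c : ℝ => (P i).eval c := fun i => (P i).continuous
  have hdotc : ∀ v : Fin m → ℝ, Continuous fun c : ℝ => gradH (σ (c * h)) ⬝ᵥ v := by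
    intro v
    simp only [dotProduct]
    exact continuous_finset_sum _ fun a _ =>
      ((continuous_apply a).comp hgc).mul continuous_const
  have hcont2 : ∀ (i : ℕ) (v : Fin m → ℝ),
      Continuous fun c : ℝ => (h * (P i).eval c) * (gradH (σ (c * h)) ⬝ᵥ v) := fun i v =>
    (continuous_const.mul (hPc i)).mul (hdotc v)
  have hint : ∀ (i : ℕ) (v : Fin m → ℝ),
      ∫ c in (0:ℝ)..1, ((h * (P i).eval c) * (gradH (σ (c * h)) ⬝ᵥ v))
        = h * (γ i ⬝ᵥ v) := by
    intro i v
    have hvi : IntervalIntegrable (fun τ : ℝ => (P i).eval τ • gradH (σ (τ * h)))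
        MeasureTheory.volume 0 1 :=
      ((hPc i).smul hgc).intervalIntegrable 0 1
    have hcomp : ∀ a : Fin m, γ i a = ∫ c in (0:ℝ)..1, (P i).eval c * gradH (σ (c * h)) a := by
      intro a
      have := (ContinuousLinearMap.proj a : (Fin m → ℝ) →L[ℝ] ℝ).intervalIntegral_comp_comm hvi
      rw [hγ i]
      simpa [smul_eq_mul] using this.symm
    simp only [dotProduct]
    rw [Finset.mul_sum]
    have : (fun c : ℝ => (h * (P i).eval c) * ∑ a, gradH (σ (c * h)) a * v a)
        = fun c : ℝ => ∑ a, (h * ((P i).eval c * gradH (σ (c * h)) a)) * v a := by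
      funext c
      rw [Finset.mul_sum]
      exact Finset.sum_congr rfl fun a _ => by ring
    rw [this, intervalIntegral.integral_finset_sum]
    · refine Finset.sum_congr rfl fun a _ => ?_
      rw [intervalIntegral.integral_mul_const, intervalIntegral.integral_const_mul,
        hcomp a]
      ring
    · intro a _
      exact ((continuous_const.mul ((hPc i).mul ((continuous_apply a).comp hgc))).mul
          continuous_const).intervalIntegrable 0 1
  -- compute the integral
  have hintsum : ∫ c in (0:ℝ)..1, g' c
      = ∑ i ∈ Finset.range s, ∑ j ∈ Finset.range s,
          h * (γ i ⬝ᵥ (ρ i j).mulVec (γ j)) := by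
    rw [intervalIntegral.integral_congr hEq, intervalIntegral.integral_finset_sum]
    · refine Finset.sum_congr rfl fun i _ => ?_
      rw [intervalIntegral.integral_finset_sum]
      · exact Finset.sum_congr rfl fun j _ => hint i _
      · intro j _
        exact (hcont2 i _).intervalIntegrable 0 1
    · intro i _
      exact (continuous_finset_sum _ fun j (_ : j ∈ Finset.range s) =>
        hcont2 i ((ρ i j).mulVec (γ j))).intervalIntegrable 0 1
  -- skew symmetry of ρ
  have hρskew : ∀ i j a b, ρ i j a b = -(ρ j i b a) := by
    intro i j a b
    have hBab : ∀ τ : ℝ, B (σ (τ * h)) a b = -(B (σ (τ * h)) b a) := by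
      intro τ
      have := congrFun (congrFun (hB (σ (τ * h))) b) a
      simp only [transpose_apply, Matrix.neg_apply] at this
      linarith
    rw [hρ, hρ]
    simp only [Matrix.of_apply]
    have heq : (fun τ : ℝ => (P i).eval τ * (P j).eval τ * B (σ (τ * h)) a b)
        = fun τ : ℝ => -((P j).eval τ * (P i).eval τ * B (σ (τ * h)) b a) := by
      funext τ
      rw [hBab τ]
      ring
    rw [heq, intervalIntegral.integral_neg]
  -- the double sum vanishes by skew symmetry
  set S : ℝ := ∑ i ∈ Finset.range s, ∑ j ∈ Finset.range s,
      γ i ⬝ᵥ (ρ i j).mulVec (γ j) with hSdef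
  have hSexp : S = ∑ i ∈ Finset.range s, ∑ j ∈ Finset.range s,
      ∑ a, ∑ b, γ i a * (ρ i j a b * γ j b) := by
    simp [hSdef, dotProduct, mulVec, Finset.mul_sum]
  have hSneg : S = -S := by
    nth_rewrite 1 [hSexp]
    have step1 : ∑ i ∈ Finset.range s, ∑ j ∈ Finset.range s,
        ∑ a, ∑ b, γ i a * (ρ i j a b * γ j b)
        = -∑ i ∈ Finset.range s, ∑ j ∈ Finset.range s,
            ∑ a, ∑ b, γ j b * (ρ j i b a * γ i a) := by
      rw [← Finset.sum_neg_distrib]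
      refine Finset.sum_congr rfl fun i _ => ?_
      rw [← Finset.sum_neg_distrib]
      refine Finset.sum_congr rfl fun j _ => ?_
      rw [← Finset.sum_neg_distrib]
      refine Finset.sum_congr rfl fun a _ => ?_
      rw [← Finset.sum_neg_distrib]
      refine Finset.sum_congr rfl fun b _ => ?_
      rw [hρskew i j a b]
      ring
    rw [step1]
    congr 1
    rw [Finset.sum_comm, hSexp]
    refine Finset.sum_congr rfl fun i _ => Finset.sum_congr rfl fun j _ => ?_
    rw [Finset.sum_comm]
  have hS0 : S = 0 := by linarith
  have hfinal : ∫ c in (0:ℝ)..1, g' c = 0 := by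
    rw [hintsum]
    have hms : ∑ i ∈ Finset.range s, ∑ j ∈ Finset.range s,
        h * (γ i ⬝ᵥ (ρ i j).mulVec (γ j)) = h * S := by
      rw [hSdef, Finset.mul_sum]
      exact Finset.sum_congr rfl fun i _ => (Finset.mul_sum _ _ _).symm
    rw [hms, hS0, mul_zero]
  rw [hfinal] at key
  have h1 : (1:ℝ) * h = h := one_mul h
  have h0 : (0:ℝ) * h = 0 := zero_mul h
  rw [h1, h0] at key
  linarith
end

section
/- If H is a polynomial of degree ν with ν ≤ 2k/s, then the PHBVM(k,s) method conserves the Hamiltonian exactly: for the polynomial u ∈ Π_s satisfying u̇(ch) = ∑_{i,j=0}^{s-1} P_i(c) ρ̂_{ij}(u) γ̂_j(u), u(0) = y_0, one has H(u(h)) = H(u(0)), where ρ̂_{ij}(u), γ̂_j(u) are defined by Gauss–Legendre quadrature of order 2k. -/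
/-!
Put `q(τ) = H(u(τh))`, a polynomial of degree at most `νs ≤ 2k`. Its derivative has degree at
most `2k - 1`, so Gauss quadrature integrates it exactly:
`H(u(h)) - H(u(0)) = ∑ ℓ, w ℓ * q'(c ℓ)`. By the chain rule and the collocation equation,
`q'(c ℓ) = h * ∇H(u(c ℓ h)) ⬝ ∑ i j, P i (c ℓ) • ρ̂ i j γ̂ j`, and regrouping the quadrature sum
turns the right-hand side into `h * ∑ i j, γ̂ i ⬝ ρ̂ i j γ̂ j`. This vanishes because every `ρ̂ i j`
is skew-symmetric (as `B` is) and `ρ̂ i j = ρ̂ j i`.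
-/

open Matrix Polynomial

namespace MvPolynomial

variable {σ R : Type*} [CommSemiring R]

theorem eval_polynomial_aeval (f : σ → R[X]) (p : MvPolynomial σ R) (x : R) :
    (aeval f p).eval x = eval (fun i => (f i).eval x) p := by
  simpa [coe_aeval_eq_eval] using congrArg (· p) (comp_aeval f (Polynomial.aeval x))

theorem derivative_aeval [Fintype σ] [DecidableEq σ] (f : σ → R[X]) (p : MvPolynomial σ R) :
    derivative (aeval f p) = ∑ i, aeval f (pderiv i p) * derivative (f i) := by
  induction p using MvPolynomial.induction_on with
  | C a => simp
  | add p q hp hq => simp [hp, hq, add_mul, Finset.sum_add_distrib]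
  | mul_X p n hp =>
    simp only [map_mul, aeval_X, derivative_mul, hp, Derivation.leibniz, pderiv_X, smul_eq_mul,
      map_add, add_mul, Finset.sum_add_distrib, Finset.sum_mul, Pi.single_apply]
    conv_rhs => rw [add_comm]
    congr 1
    · exact Finset.sum_congr rfl fun i _ => by ring
    · simp

theorem eval_derivative_aeval [Fintype σ] (f : σ → R[X]) (p : MvPolynomial σ R) (x : R) :
    (derivative (aeval f p)).eval x =
      (fun i => eval (fun j => (f j).eval x) (pderiv i p)) ⬝ᵥ
        fun i => (derivative (f i)).eval x := by
  classical
  simp [derivative_aeval, eval_finsetSum, eval_polynomial_aeval, dotProduct]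

theorem eval_aeval_comp_C_mul_X (f : σ → R[X]) (p : MvPolynomial σ R) (h x : R) :
    (aeval (fun i => (f i).comp (Polynomial.C h * Polynomial.X)) p).eval x =
      eval (fun i => (f i).eval (x * h)) p := by
  simp [eval_polynomial_aeval, mul_comm h x]

theorem eval_derivative_aeval_comp_C_mul_X [Fintype σ] (f : σ → R[X]) (p : MvPolynomial σ R)
    (h x : R) :
    (derivative (aeval (fun i => (f i).comp (Polynomial.C h * Polynomial.X)) p)).eval x =
      h * ((fun i => eval (fun j => (f j).eval (x * h)) (pderiv i p)) ⬝ᵥ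
        fun i => (derivative (f i)).eval (x * h)) := by
  simp only [eval_derivative_aeval, dotProduct, Finset.mul_sum,
    Polynomial.derivative_comp, Polynomial.derivative_mul, Polynomial.derivative_C,
    Polynomial.derivative_X, Polynomial.eval_mul, Polynomial.eval_comp, Polynomial.eval_C,
    Polynomial.eval_X, zero_mul, zero_add, mul_one, mul_comm h x]
  exact Finset.sum_congr rfl fun i _ => by ring

theorem natDegree_aeval_comp_C_mul_X_le {s : ℕ} {f : σ → R[X]} (hf : ∀ i, (f i).natDegree ≤ s)
    (p : MvPolynomial σ R) (h : R) :
    (aeval (fun i => (f i).comp (Polynomial.C h * Polynomial.X)) p).natDegree ≤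
      p.totalDegree * s := by
  refine aeval_natDegree_le p le_rfl _ fun i => Polynomial.natDegree_comp_le.trans ?_
  simpa using Nat.mul_le_mul (hf i)
    ((Polynomial.natDegree_C_mul_le h _).trans Polynomial.natDegree_X_le)

end MvPolynomial

theorem Matrix.dotProduct_mulVec_of_transpose_eq_neg {n R : Type*} [Fintype n] [CommRing R]
    {M : Matrix n n R} (hM : Mᵀ = -M) (x y : n → R) : x ⬝ᵥ M *ᵥ y = -(y ⬝ᵥ M *ᵥ x) := by
  rw [dotProduct_mulVec, ← mulVec_transpose, hM, neg_mulVec, neg_dotProduct, dotProduct_comm]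

theorem Matrix.sum_sum_dotProduct_mulVec_eq_zero {ι n R : Type*} [Fintype n] [CommRing R]
    [IsAddTorsionFree R] (S : Finset ι) (ρ : ι → ι → Matrix n n R)
    (hsymm : ∀ i j, ρ i j = ρ j i) (hskew : ∀ i j, (ρ i j)ᵀ = -ρ i j) (γ : ι → n → R) :
    ∑ i ∈ S, ∑ j ∈ S, γ i ⬝ᵥ ρ i j *ᵥ γ j = 0 := by
  refine self_eq_neg.mp ?_
  calc ∑ i ∈ S, ∑ j ∈ S, γ i ⬝ᵥ ρ i j *ᵥ γ j = ∑ i ∈ S, ∑ j ∈ S, γ j ⬝ᵥ ρ j i *ᵥ γ i :=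
        Finset.sum_comm
    _ = -∑ i ∈ S, ∑ j ∈ S, γ i ⬝ᵥ ρ i j *ᵥ γ j := by
        simp only [← Finset.sum_neg_distrib]
        refine Finset.sum_congr rfl fun i _ => Finset.sum_congr rfl fun j _ => ?_
        rw [hsymm j i, dotProduct_mulVec_of_transpose_eq_neg (hskew i j)]

theorem Matrix.sum_mul_dotProduct_sum_sum_smul {ι L n R : Type*} [Fintype L] [Fintype n]
    [CommSemiring R] (S : Finset ι) (w : L → R) (a : L → ι → R) (G : L → n → R)
    (v : ι → ι → n → R) :
    ∑ ℓ, w ℓ * (G ℓ ⬝ᵥ ∑ i ∈ S, ∑ j ∈ S, a ℓ i • v i j) =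
      ∑ i ∈ S, ∑ j ∈ S, (∑ ℓ, (w ℓ * a ℓ i) • G ℓ) ⬝ᵥ v i j := by
  simp only [dotProduct_sum, dotProduct_smul, sum_dotProduct, smul_dotProduct, Finset.mul_sum,
    smul_eq_mul, mul_assoc]
  rw [Finset.sum_comm]
  exact Finset.sum_congr rfl fun i _ => Finset.sum_comm

theorem stmt_13_general (m s k : ℕ) (h : ℝ)
    (ν : ℕ) (hν : (ν : ℝ) ≤ 2 * k / s)
    (P : ℕ → Polynomial ℝ)
    (B : (Fin m → ℝ) → Matrix (Fin m) (Fin m) ℝ)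
    (hB : ∀ y, (B y)ᵀ = -(B y))
    (Hp : MvPolynomial (Fin m) ℝ)
    (hHdeg : Hp.totalDegree ≤ ν)
    (u : Fin m → Polynomial ℝ)
    (hu : ∀ r, (u r).natDegree ≤ s)
    (c w : Fin k → ℝ)
    (hquad : ∀ q : Polynomial ℝ, q.natDegree ≤ 2 * k - 1 →
      ∑ ℓ : Fin k, w ℓ * q.eval (c ℓ) = ∫ x in (0:ℝ)..1, q.eval x)
    (γ : ℕ → (Fin m → ℝ))
    (hγ : ∀ j, γ j = ∑ ℓ : Fin k, (w ℓ * (P j).eval (c ℓ)) •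
      (fun r => MvPolynomial.eval (fun r' => (u r').eval (c ℓ * h))
        (MvPolynomial.pderiv r Hp)))
    (ρ : ℕ → ℕ → Matrix (Fin m) (Fin m) ℝ)
    (hρ : ∀ i j, ρ i j = ∑ ℓ : Fin k,
      (w ℓ * ((P i).eval (c ℓ) * (P j).eval (c ℓ))) •
        B (fun r => (u r).eval (c ℓ * h)))
    (hode : ∀ c' ∈ Set.Icc (0:ℝ) 1,
      (fun r => (Polynomial.derivative (u r)).eval (c' * h)) =
      ∑ i ∈ Finset.range s, ∑ j ∈ Finset.range s,
        (P i).eval c' • (ρ i j).mulVec (γ j)) :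
    MvPolynomial.eval (fun r => (u r).eval h) Hp
      = MvPolynomial.eval (fun r => (u r).eval 0) Hp := by
  set q : ℝ[X] := MvPolynomial.aeval (fun r => (u r).comp (C h * X)) Hp
  have hνs : ν * s ≤ 2 * k := by
    rcases s.eq_zero_or_pos with rfl | hs
    · simp
    · exact_mod_cast (le_div_iff₀ (by positivity : (0:ℝ) < s)).mp hν
  have hdeg : (derivative q).natDegree ≤ 2 * k - 1 := by
    have hq : q.natDegree ≤ Hp.totalDegree * s :=
      MvPolynomial.natDegree_aeval_comp_C_mul_X_le hu Hp h
    have := natDegree_derivative_le q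
    have := Nat.mul_le_mul_right s hHdeg
    omega
  -- The nodes `c ℓ` need not lie in `[0, 1]`: extend the collocation equation as a
  -- polynomial identity.
  have hode' : ∀ x, (fun r => (derivative (u r)).eval (x * h)) =
      ∑ i ∈ Finset.range s, ∑ j ∈ Finset.range s, (P i).eval x • (ρ i j) *ᵥ (γ j) := by
    intro x
    funext r
    have hpoly : (derivative (u r)).comp (C h * X) =
        ∑ i ∈ Finset.range s, ∑ j ∈ Finset.range s, P i * C ((ρ i j *ᵥ γ j) r) := by
      refine eq_of_infinite_eval_eq _ _ ((Set.Icc_infinite zero_lt_one).mono fun y hy => ?_)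
      simpa [eval_finsetSum, mul_comm h y] using congrFun (hode y hy) r
    simpa [eval_finsetSum, mul_comm h x] using congrArg (eval x) hpoly
  have hsymm : ∀ i j, ρ i j = ρ j i := fun i j => by simp only [hρ, mul_comm]
  have hskew : ∀ i j, (ρ i j)ᵀ = -ρ i j := fun i j => by
    simp only [hρ, transpose_sum, transpose_smul, hB, smul_neg, Finset.sum_neg_distrib]
  have hends : q.eval 1 - q.eval 0 = MvPolynomial.eval (fun r => (u r).eval h) Hp
      - MvPolynomial.eval (fun r => (u r).eval 0) Hp := by
    simp only [q, MvPolynomial.eval_aeval_comp_C_mul_X, one_mul, zero_mul]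
  rw [← sub_eq_zero, ← hends]
  calc q.eval 1 - q.eval 0 = ∫ x in (0:ℝ)..1, (derivative q).eval x :=
        (intervalIntegral.integral_eq_sub_of_hasDerivAt (fun x _ => q.hasDerivAt x)
          ((Polynomial.continuous _).intervalIntegrable _ _)).symm
    _ = ∑ ℓ, w ℓ * (derivative q).eval (c ℓ) := (hquad _ hdeg).symm
    _ = h * ∑ i ∈ Finset.range s, ∑ j ∈ Finset.range s, γ i ⬝ᵥ ρ i j *ᵥ γ j := by
        simp only [q, MvPolynomial.eval_derivative_aeval_comp_C_mul_X, hode',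
          mul_left_comm _ h, ← Finset.mul_sum, sum_mul_dotProduct_sum_sum_smul, ← hγ]
    _ = 0 := by rw [sum_sum_dotProduct_mulVec_eq_zero _ ρ hsymm hskew, mul_zero]

/-- Exact energy conservation of PHBVM(k,s) for polynomial Hamiltonians of degree
`ν ≤ 2k/s`: `H(u(h)) = H(u(0))`. -/
theorem stmt_13 (m s k : ℕ) (hs : 0 < s) (h : ℝ) (hh : 0 < h)
    (ν : ℕ) (hν : (ν : ℝ) ≤ 2 * k / s)
    (P : ℕ → Polynomial ℝ)
    (hdeg : ∀ n, (P n).natDegree = n)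
    (B : (Fin m → ℝ) → Matrix (Fin m) (Fin m) ℝ)
    (hB : ∀ y, (B y)ᵀ = -(B y))
    (Hp : MvPolynomial (Fin m) ℝ)
    (hHdeg : Hp.totalDegree ≤ ν)
    (u : Fin m → Polynomial ℝ)
    (hu : ∀ r, (u r).natDegree ≤ s)
    (c w : Fin k → ℝ)
    (hquad : ∀ q : Polynomial ℝ, q.natDegree ≤ 2 * k - 1 →
      ∑ ℓ : Fin k, w ℓ * q.eval (c ℓ) = ∫ x in (0:ℝ)..1, q.eval x)
    (γ : ℕ → (Fin m → ℝ))
    (hγ : ∀ j, γ j = ∑ ℓ : Fin k, (w ℓ * (P j).eval (c ℓ)) •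
      (fun r => MvPolynomial.eval (fun r' => (u r').eval (c ℓ * h))
        (MvPolynomial.pderiv r Hp)))
    (ρ : ℕ → ℕ → Matrix (Fin m) (Fin m) ℝ)
    (hρ : ∀ i j, ρ i j = ∑ ℓ : Fin k,
      (w ℓ * ((P i).eval (c ℓ) * (P j).eval (c ℓ))) •
        B (fun r => (u r).eval (c ℓ * h)))
    (hode : ∀ c' ∈ Set.Icc (0:ℝ) 1,
      (fun r => (Polynomial.derivative (u r)).eval (c' * h)) =
      ∑ i ∈ Finset.range s, ∑ j ∈ Finset.range s,
        (P i).eval c' • (ρ i j).mulVec (γ j)) :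
    MvPolynomial.eval (fun r => (u r).eval h) Hp
      = MvPolynomial.eval (fun r => (u r).eval 0) Hp :=
  stmt_13_general m s k h ν hν P B hB Hp hHdeg u hu c w hquad γ hγ ρ hρ hode
end

section
/- Assume the Gauss–Legendre abscissae satisfy c_{k−i+1} = 1 − c_i and b_{k−i+1} = b_i for i = 1,…,k. If (γ̂_j, ρ̂_{ij}) solves the PHBVM(k,s) nonlinear system starting from y_0 producing y_1 = y_0 + h∑_{j=0}^{s-1} ρ̂_{0j} γ̂_j, then (γ_j* , ρ_{ij}*) := ((−1)^j γ̂_j, (−1)^{i+j} ρ̂_{ij}) solves the corresponding system with initial value y_1 and stepsize −h, and the resulting step brings y_1 back to y_0: y_1 − h ∑_{j=0}^{s-1} ρ*_{0j} γ*_j = y_0. Hence the PHBVM(k,s) method is symmetric. -/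
/-!
Reflection `x ↦ 1 - x` preserves the `L²(0,1)` inner product, so `(-1)^j P_j(1 - x)` is again
an orthonormal sequence with `deg = j` and positive leading coefficients. Such a sequence is
unique (Gram–Schmidt), hence `P_j(1 - x) = (-1)^j P_j(x)` and
`∫₀^{1-t} P_μ = δ_{0μ} - (-1)^μ ∫₀^t P_μ`. With symmetric abscissae this says that the stages
of the step from `y₁` with stepsize `-h` and the sign-twisted coefficients are those of the
forward step in reverse order. Reindexing the quadrature sums by `ℓ ↦ ℓ.rev` then reproduces
the PHBVM equations, and the signs cancel in `ρ*_{0j} γ*_j`.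
-/

open Matrix Polynomial

namespace Polynomial

theorem degree_sub_smul_lt {K : Type*} [Field K] {p q : K[X]} {d : ℕ} (hp : p.degree ≤ d)
    (hq : q.natDegree = d) (hq0 : q ≠ 0) :
    (p - (p.coeff d / q.leadingCoeff) • q).degree < d := by
  rw [degree_lt_iff_coeff_zero]
  intro m hm
  rcases hm.eq_or_lt with rfl | hlt
  · rw [coeff_sub, coeff_smul, ← hq, coeff_natDegree, smul_eq_mul,
      div_mul_cancel₀ _ (leadingCoeff_ne_zero.mpr hq0), sub_self]
  · have hpm : p.coeff m = 0 := coeff_eq_zero_of_degree_lt (hp.trans_lt (by exact_mod_cast hlt))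
    have hqm : q.coeff m = 0 := coeff_eq_zero_of_natDegree_lt (hq ▸ hlt)
    simp [hpm, hqm]

end Polynomial

section OrthonormalSequence

variable {K : Type*} [Field K] (B : LinearMap.BilinForm K K[X]) {P : ℕ → K[X]}

theorem eq_zero_of_degree_lt_of_forall_bilin_eq_zero
    (hdeg : ∀ j, (P j).natDegree = j)
    (horth : ∀ i j, B (P i) (P j) = if i = j then 1 else 0) :
    ∀ (d : ℕ) (p : K[X]), p.degree < d → (∀ i < d, B p (P i) = 0) → p = 0 := by
  intro d
  induction d with
  | zero => intro p hp _; simpa using hp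
  | succ d ih =>
    intro p hp hB
    have hPd : P d ≠ 0 := by
      rintro h; simpa [h] using horth d d
    set a := p.coeff d / (P d).leadingCoeff
    have hr : p - a • P d = 0 := by
      refine ih _ (degree_sub_smul_lt (Order.le_of_lt_succ hp) (hdeg d) hPd) ?_
      intro i hi
      simp [hB i (by omega), horth, hi.ne']
    have ha : a = 0 := by
      simpa [sub_eq_zero.mp hr, horth] using hB d d.lt_succ_self
    simpa [ha] using hr

theorem eq_of_orthonormal_of_leadingCoeff_pos [LinearOrder K] [IsStrictOrderedRing K]
    {Q : ℕ → K[X]}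
    (hPdeg : ∀ j, (P j).natDegree = j) (hQdeg : ∀ j, (Q j).natDegree = j)
    (hPorth : ∀ i j, B (P i) (P j) = if i = j then 1 else 0)
    (hQorth : ∀ i j, B (Q i) (Q j) = if i = j then 1 else 0)
    (hPlead : ∀ j, 0 < (P j).leadingCoeff) (hQlead : ∀ j, 0 < (Q j).leadingCoeff) (n : ℕ) :
    P n = Q n := by
  induction n using Nat.strong_induction_on with
  | _ n ih =>
  have hPn : P n ≠ 0 := leadingCoeff_ne_zero.mp (hPlead n).ne'
  -- `Q n - α • P n` has degree `< n` and is orthogonal to every `P i = Q i` with `i < n`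
  set α := (Q n).coeff n / (P n).leadingCoeff
  have hr : Q n - α • P n = 0 := by
    refine eq_zero_of_degree_lt_of_forall_bilin_eq_zero B hPdeg hPorth n _
      (degree_sub_smul_lt (degree_le_natDegree.trans_eq (by rw [hQdeg])) (hPdeg n) hPn)
      fun i hi => ?_
    have hQni := hQorth n i
    rw [← ih i hi] at hQni
    simp [hQni, hPorth, hi.ne']
  have hQ : Q n = α • P n := sub_eq_zero.mp hr
  have hα_pos : 0 < α := by
    have hcoeff : (Q n).coeff n = (Q n).leadingCoeff := by rw [leadingCoeff, hQdeg]
    exact div_pos (hcoeff ▸ hQlead n) (hPlead n)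
  have hα : α * α = 1 := by simpa [hQ, hPorth] using hQorth n n
  rw [hQ, (mul_self_eq_one_iff.mp hα).resolve_right (by linarith), one_smul]

end OrthonormalSequence

noncomputable def unitIntervalL2 : LinearMap.BilinForm ℝ ℝ[X] :=
  LinearMap.mk₂ ℝ (fun p q => ∫ x in (0 : ℝ)..1, p.eval x * q.eval x)
    (fun p₁ p₂ q => by
      simp only [eval_add, add_mul]
      exact intervalIntegral.integral_add (Continuous.intervalIntegrable (by fun_prop) _ _)
        (Continuous.intervalIntegrable (by fun_prop) _ _))
    (fun a p q => by
      simp only [eval_smul, smul_eq_mul, mul_assoc, intervalIntegral.integral_const_mul])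
    (fun p q₁ q₂ => by
      simp only [eval_add, mul_add]
      exact intervalIntegral.integral_add (Continuous.intervalIntegrable (by fun_prop) _ _)
        (Continuous.intervalIntegrable (by fun_prop) _ _))
    (fun a p q => by
      simp only [eval_smul, smul_eq_mul, mul_left_comm _ a, intervalIntegral.integral_const_mul])

@[simp]
theorem unitIntervalL2_apply (p q : ℝ[X]) :
    unitIntervalL2 p q = ∫ x in (0 : ℝ)..1, p.eval x * q.eval x :=
  rfl

theorem unitIntervalL2_comp_one_sub_X (p q : ℝ[X]) :
    unitIntervalL2 (p.comp (1 - X)) (q.comp (1 - X)) = unitIntervalL2 p q := by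
  simpa using intervalIntegral.integral_comp_sub_left (fun x => p.eval x * q.eval x) (1 : ℝ)
    (a := 0) (b := 1)

theorem eval_one_sub_of_orthonormal {P : ℕ → ℝ[X]} (hdeg : ∀ j, (P j).natDegree = j)
    (horth : ∀ i j, unitIntervalL2 (P i) (P j) = if i = j then 1 else 0)
    (hlead : ∀ j, 0 < (P j).leadingCoeff) (j : ℕ) (x : ℝ) :
    (P j).eval (1 - x) = (-1) ^ j * (P j).eval x := by
  have hsign : ∀ n, (-1 : ℝ) ^ n * (-1) ^ n = 1 := fun n => pow_mul_pow_eq_one n (by norm_num)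
  have hX : (1 - X : ℝ[X]) = -(X - C 1) := by rw [C_1]; ring
  have hXdeg : (1 - X : ℝ[X]).natDegree = 1 := by rw [hX, natDegree_neg, natDegree_X_sub_C]
  have hXlead : (1 - X : ℝ[X]).leadingCoeff = -1 := by
    rw [hX, leadingCoeff_neg, (monic_X_sub_C 1).leadingCoeff]
  set Q : ℕ → ℝ[X] := fun j => C ((-1) ^ j) * (P j).comp (1 - X)
  have hQdeg : ∀ j, (Q j).natDegree = j := fun j => by
    rw [natDegree_C_mul (pow_ne_zero _ (by norm_num)), natDegree_comp, hXdeg, hdeg, mul_one]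
  have hQlead : ∀ j, 0 < (Q j).leadingCoeff := fun j => by
    rw [leadingCoeff_mul, leadingCoeff_C, leadingCoeff_comp (by rw [hXdeg]; exact one_ne_zero),
      hXlead, hdeg, mul_left_comm, hsign, mul_one]
    exact hlead j
  have hQorth : ∀ i j, unitIntervalL2 (Q i) (Q j) = if i = j then 1 else 0 := fun i j => by
    simp only [Q, C_mul', map_smul, LinearMap.smul_apply, unitIntervalL2_comp_one_sub_X, horth,
      smul_eq_mul]
    split_ifs with hij
    · rw [hij, mul_one, hsign]
    · simp
  have hPQ := congrArg (eval (1 - x))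
    (eq_of_orthonormal_of_leadingCoeff_pos _ hdeg hQdeg horth hQorth hlead hQlead j)
  simpa [Q, eval_comp] using hPQ

theorem eq_one_of_unitIntervalL2_self {p : ℝ[X]} (hdeg : p.natDegree = 0)
    (hnorm : unitIntervalL2 p p = 1) (hlead : 0 < p.leadingCoeff) : p = 1 := by
  obtain ⟨a, rfl⟩ : ∃ a, p = C a := ⟨_, eq_C_of_natDegree_eq_zero hdeg⟩
  have ha : a * a = 1 := by simpa using hnorm
  rw [leadingCoeff_C] at hlead
  rw [(mul_self_eq_one_iff.mp ha).resolve_right (by linarith), C_1]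

theorem integral_zero_one_sub {f : ℝ → ℝ} (hf : Continuous f) (t : ℝ) :
    ∫ x in (0 : ℝ)..1 - t, f x
      = (∫ x in (0 : ℝ)..1, f x) - ∫ x in (0 : ℝ)..t, f (1 - x) := by
  rw [intervalIntegral.integral_comp_sub_left f 1, sub_zero,
    ← intervalIntegral.integral_add_adjacent_intervals (hf.intervalIntegrable 0 (1 - t))
      (hf.intervalIntegrable (1 - t) 1), add_sub_cancel_right]

theorem integral_eval_one_sub_of_orthonormal {P : ℕ → ℝ[X]}
    (hdeg : ∀ j, (P j).natDegree = j)
    (horth : ∀ i j, unitIntervalL2 (P i) (P j) = if i = j then 1 else 0)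
    (hlead : ∀ j, 0 < (P j).leadingCoeff) (μ : ℕ) (t : ℝ) :
    ∫ x in (0 : ℝ)..1 - t, (P μ).eval x
      = (if 0 = μ then 1 else 0) - (-1) ^ μ * ∫ x in (0 : ℝ)..t, (P μ).eval x := by
  have hP0 : P 0 = 1 :=
    eq_one_of_unitIntervalL2_self (hdeg 0) (by simpa using horth 0 0) (hlead 0)
  have hmean : ∫ x in (0 : ℝ)..1, (P μ).eval x = if 0 = μ then 1 else 0 := by
    simpa [hP0] using horth 0 μ
  simp only [integral_zero_one_sub (P μ).continuous, hmean,
    eval_one_sub_of_orthonormal hdeg horth hlead, intervalIntegral.integral_const_mul]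

theorem Fin.sum_mul_smul_rev_of_symm {M : Type*} [AddCommMonoid M] [Module ℝ M] {k : ℕ}
    {c w : Fin k → ℝ} (hcsym : ∀ ℓ : Fin k, c ℓ.rev = 1 - c ℓ)
    (hwsym : ∀ ℓ : Fin k, w ℓ.rev = w ℓ)
    {g : ℝ → ℝ} {ε : ℝ} (hg : ∀ x, g (1 - x) = ε * g x) (F : Fin k → M) :
    ∑ ℓ, (w ℓ * g (c ℓ)) • F ℓ.rev = ε • ∑ ℓ, (w ℓ * g (c ℓ)) • F ℓ := by
  rw [← Equiv.sum_comp Fin.revPerm, Finset.smul_sum]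
  refine Fintype.sum_congr _ _ fun ℓ => ?_
  rw [Fin.revPerm_apply, Fin.rev_rev, hwsym, hcsym, hg, smul_smul, mul_left_comm]

theorem sum_sum_smul_of_eq_ite_sub {V : Type*} [AddCommGroup V] [Module ℝ V] (s : ℕ)
    {a a' : ℕ → ℝ} (ha : ∀ μ, a' μ = (if 0 = μ then 1 else 0) - (-1) ^ μ * a μ)
    (X : ℕ → ℕ → V) :
    ∑ μ ∈ Finset.range s, ∑ ν ∈ Finset.range s, a' μ • X μ ν
      = ∑ ν ∈ Finset.range s, X 0 ν
        - ∑ μ ∈ Finset.range s, ∑ ν ∈ Finset.range s, a μ • (-1 : ℝ) ^ μ • X μ ν := by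
  simp only [ha, sub_smul, Finset.sum_sub_distrib, ite_smul, one_smul, zero_smul, smul_smul,
    mul_comm (a _)]
  congr 1
  rw [Finset.sum_comm]
  rcases s.eq_zero_or_pos with rfl | hs
  · simp
  · simp [hs]

theorem neg_one_pow_smul_mulVec_neg_one_pow_smul {n o : Type*} [Fintype o]
    (A : Matrix n o ℝ) (v : o → ℝ) (μ ν : ℕ) :
    ((-1 : ℝ) ^ (μ + ν) • A) *ᵥ ((-1 : ℝ) ^ ν • v) = (-1 : ℝ) ^ μ • (A *ᵥ v) := by
  rw [Matrix.smul_mulVec, Matrix.mulVec_smul, smul_smul, pow_add, mul_assoc,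
    pow_mul_pow_eq_one ν (by norm_num), mul_one]

/-- Symmetry of the PHBVM(k,s) method: if `(γ̂_j, ρ̂_{ij})` solves the PHBVM system
starting from `y₀` with stepsize `h`, producing `y₁`, and the quadrature abscissae
and weights are symmetric, then `(γ*_j, ρ*_{ij}) = ((-1)^j γ̂_j, (-1)^{i+j} ρ̂_{ij})`
solves the system with initial value `y₁` and stepsize `-h`, and the resulting step
brings `y₁` back to `y₀`. -/
theorem stmt_16 (m s k : ℕ) (h : ℝ) (y0 : Fin m → ℝ)
    (P : ℕ → Polynomial ℝ)
    (hdeg : ∀ j, (P j).natDegree = j)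
    (horth : ∀ i j, (∫ x in (0:ℝ)..1, (P i).eval x * (P j).eval x)
      = if i = j then 1 else 0)
    (hlead : ∀ j, 0 < (P j).leadingCoeff)
    (c w : Fin k → ℝ)
    (hcsym : ∀ ℓ : Fin k, c ℓ.rev = 1 - c ℓ)
    (hwsym : ∀ ℓ : Fin k, w ℓ.rev = w ℓ)
    (B : (Fin m → ℝ) → Matrix (Fin m) (Fin m) ℝ)
    (gradH : (Fin m → ℝ) → (Fin m → ℝ))
    (γ : ℕ → (Fin m → ℝ)) (ρ : ℕ → ℕ → Matrix (Fin m) (Fin m) ℝ)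
    (Y : Fin k → (Fin m → ℝ))
    (hY : ∀ ℓ : Fin k, Y ℓ = y0 + h • ∑ μ ∈ Finset.range s, ∑ ν ∈ Finset.range s,
      (∫ x in (0:ℝ)..(c ℓ), (P μ).eval x) • (ρ μ ν).mulVec (γ ν))
    (hγ : ∀ j < s, γ j = ∑ ℓ : Fin k, (w ℓ * (P j).eval (c ℓ)) • gradH (Y ℓ))
    (hρ : ∀ i < s, ∀ j < s, ρ i j =
      ∑ ℓ : Fin k, (w ℓ * ((P i).eval (c ℓ) * (P j).eval (c ℓ))) • B (Y ℓ))
    (y1 : Fin m → ℝ)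
    (hy1 : y1 = y0 + h • ∑ j ∈ Finset.range s, (ρ 0 j).mulVec (γ j))
    (γs : ℕ → (Fin m → ℝ)) (ρs : ℕ → ℕ → Matrix (Fin m) (Fin m) ℝ)
    (hγs : ∀ j, γs j = ((-1 : ℝ)) ^ j • γ j)
    (hρs : ∀ i j, ρs i j = ((-1 : ℝ)) ^ (i + j) • ρ i j)
    (Ys : Fin k → (Fin m → ℝ))
    (hYs : ∀ ℓ : Fin k, Ys ℓ = y1 - h • ∑ μ ∈ Finset.range s, ∑ ν ∈ Finset.range s,
      (∫ x in (0:ℝ)..(c ℓ), (P μ).eval x) • (ρs μ ν).mulVec (γs ν)) :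
    (∀ j < s, γs j = ∑ ℓ : Fin k, (w ℓ * (P j).eval (c ℓ)) • gradH (Ys ℓ)) ∧
    (∀ i < s, ∀ j < s, ρs i j =
      ∑ ℓ : Fin k, (w ℓ * ((P i).eval (c ℓ) * (P j).eval (c ℓ))) • B (Ys ℓ)) ∧
    y1 - h • ∑ j ∈ Finset.range s, (ρs 0 j).mulVec (γs j) = y0 := by
  have horth' : ∀ i j, unitIntervalL2 (P i) (P j) = if i = j then 1 else 0 := horth
  have hP := eval_one_sub_of_orthonormal hdeg horth' hlead
  have hterm : ∀ μ ν, (ρs μ ν) *ᵥ (γs ν) = (-1 : ℝ) ^ μ • (ρ μ ν *ᵥ γ ν) := fun μ ν => by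
    rw [hρs, hγs, neg_one_pow_smul_mulVec_neg_one_pow_smul]
  have hrev : ∀ ℓ, Ys ℓ = Y ℓ.rev := fun ℓ => by
    rw [hYs, hY, hcsym, sum_sum_smul_of_eq_ite_sub s
      (integral_eval_one_sub_of_orthonormal hdeg horth' hlead · (c ℓ)), hy1]
    simp only [hterm]
    module
  refine ⟨fun j hj => ?_, fun i hi j hj => ?_, ?_⟩
  · rw [hγs, hγ j hj]
    simp only [hrev]
    exact (Fin.sum_mul_smul_rev_of_symm hcsym hwsym (g := fun x => (P j).eval x) (hP j)
      (gradH ∘ Y)).symm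
  · rw [hρs, hρ i hi j hj]
    simp only [hrev]
    refine (Fin.sum_mul_smul_rev_of_symm hcsym hwsym
      (g := fun x => (P i).eval x * (P j).eval x) (fun x => ?_) (B ∘ Y)).symm
    rw [hP, hP, pow_add]
    ring
  · simp only [hterm, pow_zero, one_smul, hy1]
    abel
end
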